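/- arXiv:2501.10798 — 4 statements merged into one kernel-verified Lean document; each statement's English description precedes it below -/
import Mathlib

section
/- Define Δ₁(u) = 1 − Γ(d/2+1)(2/u)^{d/2} J_{d/2}(u) and Δ₂(u) = 2 − 2Γ(d/2+1)(2/u)^{d/2} J_{d/2}(u) − (d+2)Γ(d/2+1)² [((2/u)^{d/2} J_{d/2}(u))']². Then lim_{u→0+} Δ₁(u)/√(Δ₂(u)) = √((d+4)/(3(d+2))). -/
open Filter Topology

/-- The Bessel function of the first kind of order `ν`, defined via its series. -/
noncomputable def besselJ (ν u : ℝ) : ℝ :=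
  ∑' j : ℕ, ((-1 : ℝ) ^ j / (j.factorial * Real.Gamma (j + ν + 1))) * (u / 2) ^ (2 * (j : ℝ) + ν)

/-- `Δ₁(u) = 1 − Γ(d/2+1) (2/u)^{d/2} J_{d/2}(u)`. -/
noncomputable def Delta1 (d : ℕ) (u : ℝ) : ℝ :=
  1 - Real.Gamma ((d : ℝ) / 2 + 1) * (2 / u) ^ ((d : ℝ) / 2) * besselJ ((d : ℝ) / 2) u

/-- `Δ₂(u) = 2 − 2Γ(d/2+1)(2/u)^{d/2}J_{d/2}(u) − (d+2)Γ(d/2+1)² [((2/u)^{d/2}J_{d/2}(u))']²`. -/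
noncomputable def Delta2 (d : ℕ) (u : ℝ) : ℝ :=
  2 - 2 * Real.Gamma ((d : ℝ) / 2 + 1) * (2 / u) ^ ((d : ℝ) / 2) * besselJ ((d : ℝ) / 2) u -
    ((d : ℝ) + 2) * Real.Gamma ((d : ℝ) / 2 + 1) ^ 2 *
      (deriv (fun v : ℝ => (2 / v) ^ ((d : ℝ) / 2) * besselJ ((d : ℝ) / 2) v) u) ^ 2


noncomputable def GG (b : ℕ → ℝ) (x : ℝ) : ℝ := ∑' j : ℕ, b j * x ^ j

noncomputable def aseq (ν : ℝ) : ℕ → ℝ :=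
  fun j => (-1)^j * Real.Gamma (ν+1) / (j.factorial * Real.Gamma (j + ν + 1) * 4^j)

noncomputable def aseq' (ν : ℝ) : ℕ → ℝ := fun j => ((j:ℝ)+1) * aseq ν (j+1)
lemma GG_summable {b : ℕ → ℝ} {M : ℝ} (hb : ∀ j, |b j| ≤ M * (2:ℝ)⁻¹ ^ j)
    {x : ℝ} (hx : |x| ≤ 1) : Summable (fun j : ℕ => b j * x ^ j) := by
  apply Summable.of_norm_bounded (g := fun j => M * (2:ℝ)⁻¹ ^ j)
    ((summable_geometric_of_lt_one (by norm_num) (by norm_num)).mul_left M)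
  intro j
  rw [Real.norm_eq_abs, abs_mul, abs_pow]
  calc |b j| * |x| ^ j ≤ |b j| * 1 := by
        exact mul_le_mul_of_nonneg_left (pow_le_one₀ (abs_nonneg x) hx) (abs_nonneg _)
    _ ≤ M * (2:ℝ)⁻¹ ^ j := by rw [mul_one]; exact hb j

lemma GG_bound {b : ℕ → ℝ} {M : ℝ} (hb : ∀ j, |b j| ≤ M * (2:ℝ)⁻¹ ^ j)
    {x : ℝ} (hx : |x| ≤ 1) : |GG b x| ≤ 2 * M := by
  have hsum : Summable (fun j : ℕ => b j * x ^ j) := GG_summable hb hx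
  have h1 : |GG b x| ≤ ∑' j : ℕ, |b j| * |x| ^ j := by
    simpa [GG, abs_mul, abs_pow] using norm_tsum_le_tsum_norm (f := fun j : ℕ => b j * x ^ j) hsum.abs
  refine h1.trans ?_
  have h2 : ∑' j : ℕ, |b j| * |x| ^ j ≤ ∑' j : ℕ, M * (2:ℝ)⁻¹ ^ j := by
    apply Summable.tsum_le_tsum _ (by simpa [abs_mul, abs_pow] using hsum.abs)
      ((summable_geometric_of_lt_one (by norm_num) (by norm_num)).mul_left M)
    intro j
    calc |b j| * |x| ^ j ≤ |b j| * 1 := by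
          exact mul_le_mul_of_nonneg_left (pow_le_one₀ (abs_nonneg x) hx) (abs_nonneg _)
      _ ≤ M * (2:ℝ)⁻¹ ^ j := by rw [mul_one]; exact hb j
  refine h2.trans ?_
  rw [tsum_mul_left, tsum_geometric_of_lt_one (by norm_num) (by norm_num)]
  norm_num [mul_comm]

lemma shift_bound {b : ℕ → ℝ} {M : ℝ} (hM : 0 ≤ M) (hb : ∀ j, |b j| ≤ M * (2:ℝ)⁻¹ ^ j) :
    ∀ j, |b (j+1)| ≤ M * (2:ℝ)⁻¹ ^ j := by
  intro j
  refine (hb (j+1)).trans ?_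
  have : ((2:ℝ)⁻¹) ^ (j+1) ≤ (2:ℝ)⁻¹ ^ j := by
    apply pow_le_pow_of_le_one (by norm_num) (by norm_num) (by omega)
  exact mul_le_mul_of_nonneg_left this hM

lemma GG_shift {b : ℕ → ℝ} {M : ℝ} (hb : ∀ j, |b j| ≤ M * (2:ℝ)⁻¹ ^ j)
    {x : ℝ} (hx : |x| ≤ 1) : GG b x = b 0 + x * GG (fun j => b (j+1)) x := by
  have hsum : Summable (fun j : ℕ => b j * x ^ j) := GG_summable hb hx
  rw [GG, Summable.tsum_eq_zero_add hsum]
  simp only [pow_zero, mul_one, GG]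
  congr 1
  rw [← tsum_mul_left]
  apply tsum_congr
  intro j
  ring

lemma GG_tendsto {b : ℕ → ℝ} {M : ℝ} (hM : 0 ≤ M) (hb : ∀ j, |b j| ≤ M * (2:ℝ)⁻¹ ^ j) :
    Tendsto (fun x => GG b x) (𝓝 0) (𝓝 (b 0)) := by
  have key : Tendsto (fun x => GG b x - b 0) (𝓝 0) (𝓝 0) := by
    apply squeeze_zero_norm' (a := fun x => 2 * M * |x|)
    · filter_upwards [Metric.ball_mem_nhds (0:ℝ) one_pos] with x hx
      rw [Metric.mem_ball, Real.dist_eq, sub_zero] at hx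
      rw [GG_shift hb hx.le, Real.norm_eq_abs]
      have : |b 0 + x * GG (fun j => b (j+1)) x - b 0| = |x| * |GG (fun j => b (j+1)) x| := by
        rw [add_sub_cancel_left, abs_mul]
      rw [this]
      calc |x| * |GG (fun j => b (j+1)) x| ≤ |x| * (2*M) :=
            mul_le_mul_of_nonneg_left (GG_bound (shift_bound hM hb) hx.le) (abs_nonneg x)
        _ = 2 * M * |x| := by ring
    · have : Tendsto (fun x : ℝ => |x|) (𝓝 0) (𝓝 0) := by
        simpa using continuous_abs.tendsto (0:ℝ)
      simpa using this.const_mul (2*M)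
  have := key.add_const (b 0)
  simpa using this

lemma GG_hasDerivAt {b : ℕ → ℝ} {M : ℝ} (hM : 0 ≤ M) (hb : ∀ j, |b j| ≤ M * (2:ℝ)⁻¹ ^ j)
    {x : ℝ} (hx : |x| < 1) :
    HasDerivAt (GG b) (GG (fun j => ((j:ℝ)+1) * b (j+1)) x) x := by
  have husum : Summable (fun j : ℕ => M * ((j:ℝ) * (2:ℝ)⁻¹ ^ j)) := by
    apply Summable.mul_left M
    have := summable_pow_mul_geometric_of_norm_lt_one (R := ℝ) 1 (r := (2:ℝ)⁻¹)
      (by rw [Real.norm_eq_abs, abs_of_pos] <;> norm_num)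
    simpa using this
  have hxt : x ∈ Set.Ioo (-1:ℝ) 1 := by
    constructor <;> [linarith [neg_abs_le x]; linarith [le_abs_self x]]
  have key : HasDerivAt (fun z => ∑' j : ℕ, b j * z ^ j)
      (∑' j : ℕ, b j * ((j:ℝ) * x ^ (j-1))) x := by
    apply hasDerivAt_tsum_of_isPreconnected husum isOpen_Ioo isPreconnected_Ioo
      (g := fun j z => b j * z ^ j) (g' := fun j z => b j * ((j:ℝ) * z ^ (j-1)))
      (y₀ := (0:ℝ)) (hy₀ := by constructor <;> norm_num) (hy := hxt)
    · intro j y _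
      exact (hasDerivAt_pow j y).const_mul (b j)
    · intro j y hy
      have hy1 : |y| ≤ 1 := by
        rw [abs_le]; exact ⟨hy.1.le, hy.2.le⟩
      rw [Real.norm_eq_abs, abs_mul, abs_mul, abs_pow]
      calc |b j| * (|(j:ℝ)| * |y| ^ (j-1)) ≤ (M * (2:ℝ)⁻¹ ^ j) * ((j:ℝ) * 1) := by
            apply mul_le_mul (hb j) _ (by positivity) (by positivity)
            apply mul_le_mul (le_of_eq (abs_of_nonneg (Nat.cast_nonneg j)))
                (pow_le_one₀ (abs_nonneg y) hy1) (by positivity) (Nat.cast_nonneg j)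
        _ = M * ((j:ℝ) * (2:ℝ)⁻¹ ^ j) := by ring
    · exact GG_summable hb (by norm_num)
  have hsum' : Summable (fun j : ℕ => b j * ((j:ℝ) * x ^ (j-1))) := by
    apply Summable.of_norm_bounded husum
    intro j
    rw [Real.norm_eq_abs, abs_mul, abs_mul, abs_pow]
    calc |b j| * (|(j:ℝ)| * |x| ^ (j-1)) ≤ (M * (2:ℝ)⁻¹ ^ j) * ((j:ℝ) * 1) := by
          apply mul_le_mul (hb j) _ (by positivity) (by positivity)
          apply mul_le_mul (le_of_eq (abs_of_nonneg (Nat.cast_nonneg j)))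
              (pow_le_one₀ (abs_nonneg x) hx.le) (by positivity) (Nat.cast_nonneg j)
      _ = M * ((j:ℝ) * (2:ℝ)⁻¹ ^ j) := by ring
  have heq : ∑' j : ℕ, b j * ((j:ℝ) * x ^ (j-1))
      = GG (fun j => ((j:ℝ)+1) * b (j+1)) x := by
    rw [Summable.tsum_eq_zero_add hsum']
    simp only [Nat.cast_zero, zero_mul, mul_zero, zero_add, GG]
    apply tsum_congr
    intro j
    push_cast
    ring_nf
  rw [← heq]
  exact key
lemma Gamma_arg_pos {ν : ℝ} (hν : 0 < ν) (j : ℕ) : 0 < Real.Gamma ((j:ℝ) + ν + 1) :=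
  Real.Gamma_pos_of_pos (by positivity)

lemma Gamma_ge {ν : ℝ} (hν : 0 < ν) (j : ℕ) :
    Real.Gamma (ν+1) ≤ Real.Gamma ((j:ℝ) + ν + 1) := by
  induction j with
  | zero => simp
  | succ n ih =>
      have h1 : ((n+1 : ℕ):ℝ) + ν + 1 = ((n:ℝ) + ν + 1) + 1 := by push_cast; ring
      have hpos : (0:ℝ) < (n:ℝ)+ν+1 := by positivity
      have hstep : Real.Gamma (((n:ℝ)+ν+1)+1) = ((n:ℝ)+ν+1) * Real.Gamma ((n:ℝ)+ν+1) :=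
        Real.Gamma_add_one hpos.ne'
      rw [h1, hstep]
      have h2 : (1:ℝ) ≤ (n:ℝ) + ν + 1 := by
        have := Nat.cast_nonneg (α:=ℝ) n; linarith
      nlinarith [Gamma_arg_pos hν n, ih]

lemma aseq_bound {ν : ℝ} (hν : 0 < ν) (j : ℕ) : |aseq ν j| ≤ 1 * ((4:ℝ)⁻¹)^j := by
  have hc : 0 < Real.Gamma (ν+1) := Real.Gamma_pos_of_pos (by linarith)
  have hG := Gamma_arg_pos hν j
  have hf : (1:ℝ) ≤ (j.factorial : ℝ) := by exact_mod_cast j.factorial_pos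
  rw [aseq, abs_div, abs_mul, abs_pow, abs_neg, abs_one, one_pow, one_mul,
    abs_of_pos hc, abs_of_pos (by positivity : (0:ℝ) < (j.factorial : ℝ) * Real.Gamma ((j:ℝ)+ν+1) * 4^j)]
  rw [div_le_iff₀ (by positivity), one_mul]
  have key : ((4:ℝ)⁻¹)^j * ((j.factorial:ℝ) * Real.Gamma ((j:ℝ)+ν+1) * 4^j)
      = (j.factorial:ℝ) * Real.Gamma ((j:ℝ)+ν+1) := by
    have h14 : ((4:ℝ)⁻¹)^j * (4:ℝ)^j = 1 := by rw [← mul_pow]; norm_num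
    calc ((4:ℝ)⁻¹)^j * ((j.factorial:ℝ) * Real.Gamma ((j:ℝ)+ν+1) * 4^j)
        = ((j.factorial:ℝ) * Real.Gamma ((j:ℝ)+ν+1)) * (((4:ℝ)⁻¹)^j * (4:ℝ)^j) := by ring
      _ = (j.factorial:ℝ) * Real.Gamma ((j:ℝ)+ν+1) := by rw [h14, mul_one]
  rw [key]
  calc Real.Gamma (ν+1) ≤ Real.Gamma ((j:ℝ)+ν+1) := Gamma_ge hν j
    _ ≤ (j.factorial : ℝ) * Real.Gamma ((j:ℝ)+ν+1) := le_mul_of_one_le_left hG.le hf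

lemma aseq_half_bound {ν : ℝ} (hν : 0 < ν) (j : ℕ) : |aseq ν j| ≤ 1 * ((2:ℝ)⁻¹)^j := by
  refine (aseq_bound hν j).trans ?_
  rw [one_mul, one_mul]
  apply pow_le_pow_left₀ (by norm_num) (by norm_num)

lemma aseq'_bound {ν : ℝ} (hν : 0 < ν) (j : ℕ) :
    |((j:ℝ)+1) * aseq ν (j+1)| ≤ 1 * ((2:ℝ)⁻¹)^j := by
  rw [abs_mul, one_mul, abs_of_pos (by positivity : (0:ℝ) < (j:ℝ)+1)]
  have h1 : |aseq ν (j+1)| ≤ ((4:ℝ)⁻¹)^(j+1) := by simpa using aseq_bound hν (j+1)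
  have h2 : ((j:ℝ)+1) ≤ 2^(j+1) := by
    exact_mod_cast (Nat.lt_two_pow_self (n := j+1)).le
  calc ((j:ℝ)+1) * |aseq ν (j+1)| ≤ 2^(j+1) * ((4:ℝ)⁻¹)^(j+1) := by
        apply mul_le_mul h2 h1 (abs_nonneg _) (by positivity)
    _ = ((2:ℝ)⁻¹)^(j+1) := by
        rw [← mul_pow]; norm_num
    _ ≤ ((2:ℝ)⁻¹)^j := by
        apply pow_le_pow_of_le_one (by norm_num) (by norm_num) (by omega)

lemma aseq_zero {ν : ℝ} (hν : 0 < ν) : aseq ν 0 = 1 := by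
  have hc : 0 < Real.Gamma (ν+1) := Real.Gamma_pos_of_pos (by linarith)
  have h0 : ((0:ℕ):ℝ) + ν + 1 = ν + 1 := by norm_num
  rw [aseq, h0]
  norm_num [Nat.factorial]
  exact hc.ne'

lemma aseq_one {ν : ℝ} (hν : 0 < ν) : aseq ν 1 = -(1/(4*(ν+1))) := by
  have hc : 0 < Real.Gamma (ν+1) := Real.Gamma_pos_of_pos (by linarith)
  have h1 : ((1:ℕ):ℝ) + ν + 1 = (ν+1) + 1 := by push_cast; ring
  have hstep : Real.Gamma ((ν+1)+1) = (ν+1) * Real.Gamma (ν+1) :=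
    Real.Gamma_add_one (by positivity)
  rw [aseq, h1, hstep]
  rw [show (Nat.factorial 1 : ℝ) = 1 by norm_num [Nat.factorial]]
  field_simp

lemma aseq_two {ν : ℝ} (hν : 0 < ν) : aseq ν 2 = 1/(32*(ν+1)*(ν+2)) := by
  have hc : 0 < Real.Gamma (ν+1) := Real.Gamma_pos_of_pos (by linarith)
  have h1 : ((2:ℕ):ℝ) + ν + 1 = ((ν+1) + 1) + 1 := by push_cast; ring
  have hstep1 : Real.Gamma ((ν+1)+1) = (ν+1) * Real.Gamma (ν+1) :=
    Real.Gamma_add_one (by positivity)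
  have hstep2 : Real.Gamma (((ν+1)+1)+1) = ((ν+1)+1) * Real.Gamma ((ν+1)+1) :=
    Real.Gamma_add_one (by positivity)
  rw [aseq, h1, hstep2, hstep1]
  rw [show (Nat.factorial 2 : ℝ) = 2 by norm_num [Nat.factorial]]
  field_simp
  ring

lemma bessel_series {ν : ℝ} (hν : 0 < ν) {u : ℝ} (hu : 0 < u) :
    Real.Gamma (ν+1) * (2/u)^ν * besselJ ν u = GG (aseq ν) (u^2) := by
  rw [besselJ, ← tsum_mul_left, GG]
  apply tsum_congr
  intro j
  have hc : 0 < Real.Gamma (ν+1) := Real.Gamma_pos_of_pos (by linarith)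
  have hG := Gamma_arg_pos hν j
  have h2u : (0:ℝ) < u/2 := by linarith
  have hr : (u/2:ℝ)^(2*(j:ℝ)+ν) = (u/2)^(2*j : ℕ) * (u/2)^ν := by
    rw [Real.rpow_add h2u]
    congr 1
    rw [← Real.rpow_natCast (u/2) (2*j)]
    congr 1
    push_cast; ring
  have hprod : (2/u)^ν * (u/2:ℝ)^ν = 1 := by
    rw [← Real.mul_rpow (by positivity) (by positivity)]
    rw [show (2/u)*(u/2) = 1 by field_simp]
    exact Real.one_rpow ν
  have hpow : ((u/2:ℝ))^(2*j:ℕ) = (u^2)^j / 4^j := by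
    rw [pow_mul, show ((u/2:ℝ))^2 = u^2/4 by ring, div_pow]
  rw [hr, hpow, aseq]
  have key : Real.Gamma (ν+1) * (2/u)^ν * ((-1)^j / (j.factorial * Real.Gamma ((j:ℝ)+ν+1)) * ((u^2)^j/4^j * (u/2)^ν))
      = ((2/u)^ν * (u/2)^ν) * (Real.Gamma (ν+1) * ((-1)^j / (j.factorial * Real.Gamma ((j:ℝ)+ν+1))) * ((u^2)^j/4^j)) := by
    ring
  rw [key, hprod, one_mul]
  field_simp

lemma GG_expand2 {b : ℕ → ℝ} {M : ℝ} (hM : 0 ≤ M) (hb : ∀ j, |b j| ≤ M * (2:ℝ)⁻¹ ^ j)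
    {x : ℝ} (hx : |x| ≤ 1) :
    GG b x = b 0 + x * (b 1 + x * GG (fun j => b (j+2)) x) := by
  rw [GG_shift hb hx, GG_shift (b := fun j => b (j+1)) (shift_bound hM hb) hx]

lemma GG_expand3 {b : ℕ → ℝ} {M : ℝ} (hM : 0 ≤ M) (hb : ∀ j, |b j| ≤ M * (2:ℝ)⁻¹ ^ j)
    {x : ℝ} (hx : |x| ≤ 1) :
    GG b x = b 0 + x * (b 1 + x * (b 2 + x * GG (fun j => b (j+3)) x)) := by
  rw [GG_shift hb hx, GG_shift (b := fun j => b (j+1)) (shift_bound hM hb) hx,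
    GG_shift (b := fun j => b (j+1+1)) (shift_bound hM (shift_bound hM hb)) hx]

lemma aseq'_half_bound {ν : ℝ} (hν : 0 < ν) (j : ℕ) : |aseq' ν j| ≤ 1 * ((2:ℝ)⁻¹)^j :=
  aseq'_bound hν j

lemma aseq_shift_bound {ν : ℝ} (hν : 0 < ν) (k j : ℕ) :
    |aseq ν (j+k)| ≤ 1 * ((2:ℝ)⁻¹)^j := by
  refine (aseq_bound hν (j+k)).trans ?_
  rw [one_mul, one_mul]
  calc ((4:ℝ)⁻¹)^(j+k) ≤ ((4:ℝ)⁻¹)^j :=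
        pow_le_pow_of_le_one (by norm_num) (by norm_num) (by omega)
    _ ≤ ((2:ℝ)⁻¹)^j := pow_le_pow_left₀ (by norm_num) (by norm_num) j

lemma aseq'_shift_bound {ν : ℝ} (hν : 0 < ν) (k j : ℕ) :
    |aseq' ν (j+k)| ≤ 1 * ((2:ℝ)⁻¹)^j := by
  refine (aseq'_half_bound hν (j+k)).trans ?_
  rw [one_mul, one_mul]
  exact pow_le_pow_of_le_one (by norm_num) (by norm_num) (by omega)

lemma besselJ_deriv {ν : ℝ} (hν : 0 < ν) {u : ℝ} (hu : u ∈ Set.Ioo (0:ℝ) 1) :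
    deriv (fun v : ℝ => (2/v)^ν * besselJ ν v) u
      = (Real.Gamma (ν+1))⁻¹ * (GG (aseq' ν) (u^2) * (2*u)) := by
  have hc : 0 < Real.Gamma (ν+1) := Real.Gamma_pos_of_pos (by linarith)
  have hx : |u^2| < 1 := by
    rw [abs_of_nonneg (sq_nonneg u)]; nlinarith [hu.1, hu.2]
  have h1 : HasDerivAt (fun v:ℝ => GG (aseq ν) (v^2)) (GG (aseq' ν) (u^2) * (2*u)) u := by
    have hpow : HasDerivAt (fun v:ℝ => v^2) (2*u) u := by
      simpa using hasDerivAt_pow 2 u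
    have hG := GG_hasDerivAt (M:=1) (by norm_num) (fun j => aseq_half_bound hν j) hx
    have h1' : HasDerivAt ((GG (aseq ν)) ∘ (fun v : ℝ => v^2))
        (GG (aseq' ν) (u^2) * (2*u)) u :=
      HasDerivAt.comp (h := fun v : ℝ => v^2) (h₂ := GG (aseq ν)) u hG hpow
    exact h1'
  have h2 := h1.const_mul ((Real.Gamma (ν+1))⁻¹)
  have heq : (fun v : ℝ => (2/v)^ν * besselJ ν v)
      =ᶠ[𝓝 u] (fun v => (Real.Gamma (ν+1))⁻¹ * GG (aseq ν) (v^2)) := by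
    filter_upwards [IsOpen.mem_nhds isOpen_Ioi hu.1] with v hv
    rw [← bessel_series hν hv]
    field_simp
  rw [heq.deriv_eq]
  exact h2.deriv

theorem stmt4 (d : ℕ) (hd : 1 ≤ d) :
    Tendsto (fun u : ℝ => Delta1 d u / Real.sqrt (Delta2 d u)) (𝓝[>] 0)
      (𝓝 (Real.sqrt (((d : ℝ) + 4) / (3 * ((d : ℝ) + 2))))) := by
  have hd1 : (1:ℝ) ≤ (d:ℝ) := by exact_mod_cast hd
  set ν : ℝ := (d:ℝ)/2 with hνdef
  have hν : 0 < ν := by rw [hνdef]; linarith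
  have hc : 0 < Real.Gamma (ν+1) := Real.Gamma_pos_of_pos (by linarith)
  set D : ℝ := (d:ℝ) + 2 with hDdef
  have hD : 0 < D := by rw [hDdef]; linarith
  have hd4 : (0:ℝ) < (d:ℝ) + 4 := by linarith
  set a : ℕ → ℝ := aseq ν with hadef
  set a' : ℕ → ℝ := aseq' ν with ha'def
  have hba : ∀ j, |a j| ≤ 1 * ((2:ℝ)⁻¹)^j := fun j => aseq_half_bound hν j
  have hba' : ∀ j, |a' j| ≤ 1 * ((2:ℝ)⁻¹)^j := fun j => aseq'_half_bound hν j
  have hbs1 : ∀ j, |a (j+1)| ≤ 1 * ((2:ℝ)⁻¹)^j := fun j => aseq_shift_bound hν 1 j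
  have hbs3 : ∀ j, |a (j+3)| ≤ 1 * ((2:ℝ)⁻¹)^j := fun j => aseq_shift_bound hν 3 j
  have hbq2 : ∀ j, |a' (j+2)| ≤ 1 * ((2:ℝ)⁻¹)^j := fun j => aseq'_shift_bound hν 2 j
  have ha0 : a 0 = 1 := aseq_zero hν
  have ha1 : a 1 = -(1/(2*D)) := by
    rw [hadef, aseq_one hν, hνdef, hDdef]
    have h1 : (0:ℝ) < 4*((d:ℝ)/2+1) := by linarith
    field_simp
    ring
  have ha2 : a 2 = 1/(8*D*((d:ℝ)+4)) := by
    rw [hadef, aseq_two hν, hνdef, hDdef]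
    have h1 : (0:ℝ) < 32*((d:ℝ)/2+1)*((d:ℝ)/2+2) := by nlinarith
    field_simp
    ring
  have ha'0 : a' 0 = a 1 := by rw [ha'def, hadef]; simp [aseq']
  have ha'1 : a' 1 = 2 * a 2 := by rw [ha'def, hadef]; norm_num [aseq']
  set L2 : ℝ := 3/(4*D*((d:ℝ)+4)) with hL2def
  have hL2pos : 0 < L2 := by rw [hL2def]; positivity
  -- limits
  have T2 : Tendsto (fun u:ℝ => u^2) (𝓝[>] (0:ℝ)) (𝓝 0) := by
    have h : Tendsto (fun u:ℝ => u^2) (𝓝 0) (𝓝 0) := by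
      simpa using (continuous_pow 2).tendsto (0:ℝ)
    exact h.mono_left nhdsWithin_le_nhds
  have TNum : Tendsto (fun u:ℝ => -(GG (fun j => a (j+1)) (u^2))) (𝓝[>] (0:ℝ))
      (𝓝 (1/(2*D))) := by
    have h : Tendsto (fun u:ℝ => GG (fun j => a (j+1)) (u^2)) (𝓝[>] (0:ℝ))
        (𝓝 ((fun j => a (j+1)) 0)) :=
      (GG_tendsto (M:=1) (by norm_num) hbs1).comp T2
    have h2 := h.neg
    convert h2 using 2
    simp only []
    rw [ha1]
    ring
  have t3 : Tendsto (fun u:ℝ => GG (fun j => a (j+3)) (u^2)) (𝓝[>] (0:ℝ))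
      (𝓝 ((fun j => a (j+3)) 0)) := (GG_tendsto (M:=1) (by norm_num) hbs3).comp T2
  have tq : Tendsto (fun u:ℝ => GG (fun j => a' (j+2)) (u^2)) (𝓝[>] (0:ℝ))
      (𝓝 ((fun j => a' (j+2)) 0)) := (GG_tendsto (M:=1) (by norm_num) hbq2).comp T2
  have tW : Tendsto (fun u:ℝ => GG a' (u^2)) (𝓝[>] (0:ℝ)) (𝓝 (a' 0)) :=
    (GG_tendsto (M:=1) (by norm_num) hba').comp T2
  have TR : Tendsto (fun u:ℝ => -2*(a 2) - 2*u^2*(GG (fun j => a (j+3)) (u^2))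
      - 4*D*(2*(a 2) + u^2*(GG (fun j => a' (j+2)) (u^2)))*(GG a' (u^2) + a 1))
      (𝓝[>] (0:ℝ)) (𝓝 L2) := by
    have step := ((tendsto_const_nhds (x := -2*(a 2))).sub ((T2.const_mul 2).mul t3)).sub
      ((((T2.mul tq).const_add (2*(a 2))).const_mul (4*D)).mul (tW.add_const (a 1)))
    convert step using 2
    simp only []
    rw [ha'0, ha1, ha2, hL2def]
    field_simp
    ring
  have TF : Tendsto (fun u:ℝ => (-(GG (fun j => a (j+1)) (u^2)))
      / Real.sqrt (-2*(a 2) - 2*u^2*(GG (fun j => a (j+3)) (u^2))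
      - 4*D*(2*(a 2) + u^2*(GG (fun j => a' (j+2)) (u^2)))*(GG a' (u^2) + a 1)))
      (𝓝[>] (0:ℝ)) (𝓝 ((1/(2*D)) / Real.sqrt L2)) := by
    apply TNum.div ((Real.continuous_sqrt.tendsto L2).comp TR)
    exact (Real.sqrt_pos.mpr hL2pos).ne'
  -- eventual equality
  have Ev : ∀ᶠ u in 𝓝[>] (0:ℝ), Delta1 d u / Real.sqrt (Delta2 d u)
      = (-(GG (fun j => a (j+1)) (u^2)))
      / Real.sqrt (-2*(a 2) - 2*u^2*(GG (fun j => a (j+3)) (u^2))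
      - 4*D*(2*(a 2) + u^2*(GG (fun j => a' (j+2)) (u^2)))*(GG a' (u^2) + a 1)) := by
    filter_upwards [Ioo_mem_nhdsGT_of_mem (by norm_num : (0:ℝ) ∈ Set.Ico (0:ℝ) 1)] with u hu
    have hu0 : 0 < u := hu.1
    have hx0 : 0 < u^2 := by positivity
    have hx1 : |u^2| < 1 := by rw [abs_of_pos hx0]; nlinarith [hu.2, hu.1]
    have hser : Real.Gamma (ν+1) * (2/u)^ν * besselJ ν u = GG a (u^2) := bessel_series hν hu0
    have hGa : GG a (u^2) = 1 + u^2 * (a 1 + u^2 * (a 2 + u^2 * GG (fun j => a (j+3)) (u^2))) := by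
      rw [GG_expand3 (by norm_num) hba hx1.le, ha0]
    have hW : GG a' (u^2) = a 1 + u^2 * (2*(a 2) + u^2 * GG (fun j => a' (j+2)) (u^2)) := by
      rw [GG_expand2 (by norm_num) hba' hx1.le, ha'0, ha'1]
    have hD1 : Delta1 d u = u^2 * (-(GG (fun j => a (j+1)) (u^2))) := by
      show 1 - Real.Gamma (ν + 1) * (2 / u) ^ ν * besselJ ν u = _
      rw [hser, GG_shift hba hx1.le, ha0]
      ring
    have hder : deriv (fun v : ℝ => (2/v)^ν * besselJ ν v) u
        = (Real.Gamma (ν+1))⁻¹ * (GG a' (u^2) * (2*u)) := besselJ_deriv hν hu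
    have hD2 : Delta2 d u = (u^2)^2 * (-2*(a 2) - 2*u^2*(GG (fun j => a (j+3)) (u^2))
        - 4*D*(2*(a 2) + u^2*(GG (fun j => a' (j+2)) (u^2)))*(GG a' (u^2) + a 1)) := by
      show 2 - 2 * Real.Gamma (ν+1) * (2/u)^ν * besselJ ν u - D * Real.Gamma (ν+1)^2 *
        (deriv (fun v : ℝ => (2/v)^ν * besselJ ν v) u)^2 = _
      rw [hder]
      have h2c : 2 * Real.Gamma (ν+1) * (2/u)^ν * besselJ ν u = 2 * GG a (u^2) := by
        rw [← hser]; ring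
      rw [h2c, hGa, hW, ha1]
      field_simp
      ring
    rw [hD1, hD2, Real.sqrt_mul (by positivity) _, Real.sqrt_sq hx0.le,
      mul_div_mul_left _ _ hx0.ne']
  -- final value
  have hval : (1/(2*D)) / Real.sqrt L2 = Real.sqrt (((d:ℝ)+4)/(3*D)) := by
    have harg : (((d:ℝ)+4)/(3*D)) * L2 = (1/(2*D))^2 := by
      rw [hL2def]
      field_simp
      ring
    have h1 : Real.sqrt (((d:ℝ)+4)/(3*D)) * Real.sqrt L2 = 1/(2*D) := by
      rw [← Real.sqrt_mul (by positivity) _, harg, Real.sqrt_sq (by positivity)]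
    rw [← h1, mul_div_assoc, div_self (Real.sqrt_pos.mpr hL2pos).ne', mul_one]
  rw [show (3 : ℝ) * ((d:ℝ)+2) = 3*D by rw [hDdef], ← hval]
  exact Tendsto.congr' (Filter.EventuallyEq.symm Ev) TF
end

section
/- There exist constants c₂, c₃ > 0 such that Δ₁(u) ≥ c₃ u² and Δ₂(u) ≥ c₃ u⁴ for all 0 < u ≤ c₂. -/
open Filter Topology

namespace Stmt6Aux

/-- coefficient of the normalized Bessel power series in x = (u/2)^2 -/
noncomputable def bcoef (ν : ℝ) (j : ℕ) : ℝ :=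
  Real.Gamma (ν + 1) * ((-1 : ℝ) ^ j / (j.factorial * Real.Gamma ((j : ℝ) + ν + 1)))

lemma gamma_mono (ν : ℝ) (hν : 0 < ν) (j : ℕ) :
    Real.Gamma (ν + 1) ≤ Real.Gamma ((j : ℝ) + ν + 1) := by
  induction j with
  | zero => simp
  | succ n ih =>
    have hpos : (0:ℝ) < (n:ℝ) + ν + 1 := by positivity
    have h1 : ((n+1 : ℕ) : ℝ) + ν + 1 = ((n:ℝ) + ν + 1) + 1 := by push_cast; ring
    rw [h1, Real.Gamma_add_one hpos.ne']
    have hg : 0 < Real.Gamma ((n:ℝ) + ν + 1) := Real.Gamma_pos_of_pos hpos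
    nlinarith [Real.Gamma_pos_of_pos hpos]

lemma abs_bcoef_le (ν : ℝ) (hν : 0 < ν) (j : ℕ) :
    |bcoef ν j| ≤ 1 / j.factorial := by
  have hΓ1 : (0:ℝ) < Real.Gamma (ν + 1) := Real.Gamma_pos_of_pos (by linarith)
  have hΓj : (0:ℝ) < Real.Gamma ((j:ℝ) + ν + 1) := Real.Gamma_pos_of_pos (by positivity)
  have hfac : (0:ℝ) < (j.factorial : ℝ) := by exact_mod_cast j.factorial_pos
  rw [bcoef, abs_mul, abs_div, abs_pow, abs_neg, abs_one, one_pow,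
    abs_of_pos hΓ1, abs_of_pos (by positivity : (0:ℝ) < (j.factorial : ℝ) * Real.Gamma ((j:ℝ) + ν + 1))]
  rw [mul_one_div, div_le_div_iff₀ (by positivity) hfac]
  have := gamma_mono ν hν j
  nlinarith

lemma abs_bcoef_le_one (ν : ℝ) (hν : 0 < ν) (j : ℕ) : |bcoef ν j| ≤ 1 := by
  refine (abs_bcoef_le ν hν j).trans ?_
  rw [div_le_one (by exact_mod_cast j.factorial_pos)]
  exact_mod_cast j.factorial_pos

lemma abs_bcoef_mul_le_one (ν : ℝ) (hν : 0 < ν) (j : ℕ) : (j:ℝ) * |bcoef ν j| ≤ 1 := by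
  have h := abs_bcoef_le ν hν j
  have hj : (j:ℝ) ≤ (j.factorial : ℝ) := by exact_mod_cast Nat.self_le_factorial j
  have hfac : (0:ℝ) < (j.factorial : ℝ) := by exact_mod_cast j.factorial_pos
  have habs : 0 ≤ |bcoef ν j| := abs_nonneg _
  calc (j:ℝ) * |bcoef ν j| ≤ (j.factorial : ℝ) * (1 / j.factorial) := by
        apply mul_le_mul hj h habs hfac.le
    _ = 1 := by field_simp


noncomputable def Fs (ν : ℝ) (x : ℝ) : ℝ := ∑' j : ℕ, bcoef ν j * x ^ j
noncomputable def Hs (ν : ℝ) (x : ℝ) : ℝ := ∑' j : ℕ, bcoef ν j * ((j : ℝ) * x ^ (j - 1))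

lemma summable_Fs (ν : ℝ) (hν : 0 < ν) (x : ℝ) : Summable (fun j : ℕ => bcoef ν j * x ^ j) := by
  apply Summable.of_norm
  apply Summable.of_nonneg_of_le (fun j => norm_nonneg _)
    (fun j => ?_) (Real.summable_pow_div_factorial |x|)
  rw [Real.norm_eq_abs, abs_mul, abs_pow]
  calc |bcoef ν j| * |x| ^ j ≤ (1 / j.factorial) * |x| ^ j := by
        apply mul_le_mul_of_nonneg_right (abs_bcoef_le ν hν j) (by positivity)
    _ = |x| ^ j / j.factorial := by ring

lemma summable_Hs (ν : ℝ) (hν : 0 < ν) (x : ℝ) (hx : |x| ≤ 1) :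
    Summable (fun j : ℕ => bcoef ν j * ((j : ℝ) * x ^ (j - 1))) := by
  apply Summable.of_norm
  apply Summable.of_nonneg_of_le (fun j => norm_nonneg _) (fun j => ?_)
    (Real.summable_pow_div_factorial 2)
  rw [Real.norm_eq_abs, abs_mul, abs_mul, abs_pow, Nat.abs_cast]
  have h1 : |x| ^ (j - 1) ≤ 1 := pow_le_one₀ (abs_nonneg x) hx
  have h2 : |bcoef ν j| ≤ 1 / j.factorial := abs_bcoef_le ν hν j
  have h3 : (j:ℝ) ≤ 2 ^ j := by exact_mod_cast (Nat.lt_two_pow_self (n := j)).le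
  have hfac : (0:ℝ) < (j.factorial : ℝ) := by exact_mod_cast j.factorial_pos
  have habs : (0:ℝ) ≤ |bcoef ν j| := abs_nonneg _
  calc |bcoef ν j| * ((j:ℝ) * |x| ^ (j - 1)) ≤ |bcoef ν j| * ((j:ℝ) * 1) := by
        apply mul_le_mul_of_nonneg_left (by nlinarith [Nat.cast_nonneg (α := ℝ) j]) habs
    _ = (j:ℝ) * |bcoef ν j| := by ring
    _ ≤ 2 ^ j * (1 / j.factorial) := by
        apply mul_le_mul h3 h2 habs (by positivity)
    _ = 2 ^ j / j.factorial := by ring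


lemma hasDerivAt_Fs (ν : ℝ) (hν : 0 < ν) {x : ℝ} (hx : x ∈ Metric.ball (0:ℝ) 1) :
    HasDerivAt (Fs ν) (Hs ν x) x := by
  apply hasDerivAt_of_tendstoUniformlyOn (l := atTop) (f := fun N : ℕ => fun y => ∑ j ∈ Finset.range N, bcoef ν j * y ^ j)
    (f' := fun N : ℕ => fun y => ∑ j ∈ Finset.range N, bcoef ν j * ((j:ℝ) * y ^ (j - 1)))
    Metric.isOpen_ball ?_ ?_ ?_ hx
  · apply tendstoUniformlyOn_tsum_nat (u := fun j : ℕ => (2:ℝ) ^ j / j.factorial)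
      (Real.summable_pow_div_factorial 2)
    intro j y hy
    rw [Metric.mem_ball, Real.dist_eq, sub_zero] at hy
    rw [Real.norm_eq_abs, abs_mul, abs_mul, abs_pow, Nat.abs_cast]
    have h1 : |y| ^ (j - 1) ≤ 1 := pow_le_one₀ (abs_nonneg y) hy.le
    have h2 : |bcoef ν j| ≤ 1 / j.factorial := abs_bcoef_le ν hν j
    have h3 : (j:ℝ) ≤ 2 ^ j := by exact_mod_cast (Nat.lt_two_pow_self (n := j)).le
    have habs : (0:ℝ) ≤ |bcoef ν j| := abs_nonneg _
    calc |bcoef ν j| * ((j:ℝ) * |y| ^ (j - 1)) ≤ |bcoef ν j| * ((j:ℝ) * 1) := by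
          apply mul_le_mul_of_nonneg_left (by nlinarith [Nat.cast_nonneg (α := ℝ) j]) habs
      _ = (j:ℝ) * |bcoef ν j| := by ring
      _ ≤ 2 ^ j * (1 / j.factorial) := mul_le_mul h3 h2 habs (by positivity)
      _ = 2 ^ j / j.factorial := by ring
  · filter_upwards with N y _
    apply HasDerivAt.fun_sum
    intro j _
    simpa using (hasDerivAt_pow j y).const_mul (bcoef ν j)
  · intro y _
    exact (summable_Fs ν hν y).hasSum.tendsto_sum_nat


lemma tail_bound {x : ℝ} (hx0 : 0 ≤ x) (hx : x ≤ 1/2) (f : ℕ → ℝ) (n : ℕ)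
    (hf : ∀ j, |f j| ≤ x ^ (j + n)) : |∑' j, f j| ≤ 2 * x ^ n := by
  have hx1 : x < 1 := by linarith
  have hg : Summable (fun j : ℕ => x ^ j * x ^ n) :=
    (summable_geometric_of_lt_one hx0 hx1).mul_right _
  have hg' : Summable (fun j : ℕ => x ^ (j + n)) := by
    apply hg.congr; intro j; rw [pow_add]
  have hsf : Summable (fun j : ℕ => |f j|) :=
    Summable.of_nonneg_of_le (fun j => abs_nonneg _) hf hg'
  calc |∑' j, f j| ≤ ∑' j, |f j| := by
        simpa [Real.norm_eq_abs] using norm_tsum_le_tsum_norm (f := f) (by simpa [Real.norm_eq_abs] using hsf)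
    _ ≤ ∑' j : ℕ, x ^ (j + n) := Summable.tsum_le_tsum hf hsf hg'
    _ = (∑' j : ℕ, x ^ j) * x ^ n := by
        rw [← tsum_mul_right]; exact tsum_congr fun j => by rw [pow_add]
    _ = (1 - x)⁻¹ * x ^ n := by rw [tsum_geometric_of_lt_one hx0 hx1]
    _ ≤ 2 * x ^ n := by
        apply mul_le_mul_of_nonneg_right _ (by positivity)
        rw [inv_le_comm₀ (by linarith) (by norm_num)]
        linarith

set_option maxHeartbeats 1000000 in
lemma Fs_expansion (ν : ℝ) (hν : 0 < ν) {x : ℝ} (hx0 : 0 ≤ x) (hx : x ≤ 1/2) :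
    |Fs ν x - (bcoef ν 0 + bcoef ν 1 * x + bcoef ν 2 * x ^ 2)| ≤ 2 * x ^ 3 := by
  have hs := summable_Fs ν hν x
  have e0 : Fs ν x = bcoef ν 0 + ∑' j : ℕ, bcoef ν (j+1) * x ^ (j+1) := by
    rw [Fs, Summable.tsum_eq_zero_add hs]; simp
  have hs1 : Summable (fun j : ℕ => bcoef ν (j+1) * x ^ (j+1)) := by
    exact (summable_nat_add_iff 1).mpr hs
  have e1 : (∑' j : ℕ, bcoef ν (j+1) * x ^ (j+1)) =
      bcoef ν 1 * x + ∑' j : ℕ, bcoef ν (j+2) * x ^ (j+2) := by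
    rw [Summable.tsum_eq_zero_add hs1]; norm_num
  have hs2 : Summable (fun j : ℕ => bcoef ν (j+2) * x ^ (j+2)) :=
    (summable_nat_add_iff 2).mpr hs
  have e2 : (∑' j : ℕ, bcoef ν (j+2) * x ^ (j+2)) =
      bcoef ν 2 * x ^ 2 + ∑' j : ℕ, bcoef ν (j+3) * x ^ (j+3) := by
    rw [Summable.tsum_eq_zero_add hs2]
  rw [e0, e1, e2]
  have : bcoef ν 0 + (bcoef ν 1 * x + (bcoef ν 2 * x ^ 2 + ∑' j : ℕ, bcoef ν (j+3) * x ^ (j+3))) -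
      (bcoef ν 0 + bcoef ν 1 * x + bcoef ν 2 * x ^ 2) = ∑' j : ℕ, bcoef ν (j+3) * x ^ (j+3) := by
    ring
  rw [this]
  apply tail_bound hx0 hx
  intro j
  rw [abs_mul, abs_pow, abs_of_nonneg hx0]
  calc |bcoef ν (j+3)| * x ^ (j+3) ≤ 1 * x ^ (j+3) :=
        mul_le_mul_of_nonneg_right (abs_bcoef_le_one ν hν _) (by positivity)
    _ = x ^ (j+3) := one_mul _

lemma Hs_expansion (ν : ℝ) (hν : 0 < ν) {x : ℝ} (hx0 : 0 ≤ x) (hx : x ≤ 1/2) :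
    |Hs ν x - (bcoef ν 1 + 2 * bcoef ν 2 * x)| ≤ 2 * x ^ 2 := by
  have hs : Summable (fun j : ℕ => bcoef ν j * ((j:ℝ) * x ^ (j-1))) :=
    summable_Hs ν hν x (by rw [abs_of_nonneg hx0]; linarith)
  have e0 : Hs ν x = 0 + ∑' j : ℕ, bcoef ν (j+1) * (((j:ℝ)+1) * x ^ j) := by
    rw [Hs, Summable.tsum_eq_zero_add hs]
    push_cast
    simp
  have hs1 : Summable (fun j : ℕ => bcoef ν (j+1) * (((j:ℝ)+1) * x ^ j)) := by
    have := (summable_nat_add_iff 1).mpr hs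
    apply this.congr
    intro j
    push_cast
    simp
  have e1 : (∑' j : ℕ, bcoef ν (j+1) * (((j:ℝ)+1) * x ^ j)) =
      bcoef ν 1 + ∑' j : ℕ, bcoef ν (j+2) * (((j:ℝ)+2) * x ^ (j+1)) := by
    rw [Summable.tsum_eq_zero_add hs1]
    norm_num
    exact tsum_congr fun b => by push_cast; ring
  have hs2 : Summable (fun j : ℕ => bcoef ν (j+2) * (((j:ℝ)+2) * x ^ (j+1))) := by
    have := (summable_nat_add_iff 2).mpr hs
    apply this.congr
    intro j
    push_cast
    norm_num
  have e2 : (∑' j : ℕ, bcoef ν (j+2) * (((j:ℝ)+2) * x ^ (j+1))) =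
      bcoef ν 2 * (2 * x) + ∑' j : ℕ, bcoef ν (j+3) * (((j:ℝ)+3) * x ^ (j+2)) := by
    rw [Summable.tsum_eq_zero_add hs2]
    norm_num
    exact tsum_congr fun b => by push_cast; ring
  rw [e0, e1, e2]
  have : 0 + (bcoef ν 1 + (bcoef ν 2 * (2*x) + ∑' j : ℕ, bcoef ν (j+3) * (((j:ℝ)+3) * x ^ (j+2)))) -
      (bcoef ν 1 + 2 * bcoef ν 2 * x) = ∑' j : ℕ, bcoef ν (j+3) * (((j:ℝ)+3) * x ^ (j+2)) := by
    ring
  rw [this]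
  apply tail_bound hx0 hx
  intro j
  rw [abs_mul, abs_mul, abs_pow, abs_of_nonneg hx0, abs_of_nonneg (by positivity : (0:ℝ) ≤ (j:ℝ)+3)]
  have h2 : ((j:ℝ)+3) * |bcoef ν (j+3)| ≤ 1 := by
    have := abs_bcoef_mul_le_one ν hν (j+3)
    push_cast at this
    linarith
  calc |bcoef ν (j+3)| * (((j:ℝ)+3) * x ^ (j+2)) = (((j:ℝ)+3) * |bcoef ν (j+3)|) * x ^ (j+2) := by ring
    _ ≤ 1 * x ^ (j+2) := mul_le_mul_of_nonneg_right h2 (by positivity)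
    _ = x ^ (j+2) := one_mul _


lemma bcoef_zero (ν : ℝ) (hν : 0 < ν) : bcoef ν 0 = 1 := by
  have h : Real.Gamma (ν + 1) ≠ 0 := (Real.Gamma_pos_of_pos (by linarith)).ne'
  rw [bcoef]
  push_cast
  rw [zero_add]
  field_simp
  simp

lemma bcoef_one (ν : ℝ) (hν : 0 < ν) : bcoef ν 1 = -(1/(ν+1)) := by
  have h : Real.Gamma (ν + 1) ≠ 0 := (Real.Gamma_pos_of_pos (by linarith)).ne'
  have h2 : ((1:ℕ):ℝ) + ν + 1 = (ν + 1) + 1 := by push_cast; ring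
  rw [bcoef, h2, Real.Gamma_add_one (show (ν+1:ℝ) ≠ 0 by positivity)]
  have hν1 : (ν+1) ≠ 0 := by positivity
  obtain ⟨G, hG, hGne⟩ : ∃ G : ℝ, Real.Gamma (ν+1) = G ∧ G ≠ 0 := ⟨_, rfl, h⟩
  rw [hG]
  field_simp
  ring

lemma bcoef_two (ν : ℝ) (hν : 0 < ν) : bcoef ν 2 = 1/(2*(ν+1)*(ν+2)) := by
  have h : Real.Gamma (ν + 1) ≠ 0 := (Real.Gamma_pos_of_pos (by linarith)).ne'
  have h2 : ((2:ℕ):ℝ) + ν + 1 = ((ν + 1) + 1) + 1 := by push_cast; ring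
  rw [bcoef, h2, Real.Gamma_add_one (show (ν+1+1:ℝ) ≠ 0 by positivity),
    Real.Gamma_add_one (show (ν+1:ℝ) ≠ 0 by positivity)]
  have hν1 : (ν+1) ≠ 0 := by positivity
  have hν2 : (ν+1+1) ≠ 0 := by positivity
  rw [show (Nat.factorial 2 : ℝ) = 2 by norm_num [Nat.factorial]]
  obtain ⟨G, hG, hGne⟩ : ∃ G : ℝ, Real.Gamma (ν+1) = G ∧ G ≠ 0 := ⟨_, rfl, h⟩
  rw [hG]
  have hν2' : (ν+1+1) ≠ 0 := by positivity
  field_simp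
  ring

lemma besselJ_eq (ν u : ℝ) (hν : 0 < ν) (hu : 0 < u) :
    Real.Gamma (ν + 1) * (2 / u) ^ ν * besselJ ν u = Fs ν ((u / 2) ^ 2) := by
  have ht : (0:ℝ) < u / 2 := by linarith
  have hrw : ∀ j : ℕ, ((u:ℝ)/2) ^ (2 * (j:ℝ) + ν) = ((u/2)^2)^j * (u/2) ^ ν := by
    intro j
    rw [Real.rpow_add ht]
    congr 1
    rw [show (2 * (j:ℝ)) = ((2*j : ℕ) : ℝ) by push_cast; ring, Real.rpow_natCast, pow_mul]
  have h1 : ((2:ℝ)/u) ^ ν * (u/2) ^ ν = 1 := by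
    rw [← Real.mul_rpow (by positivity) ht.le]
    rw [show (2/u) * (u/2) = 1 by field_simp]
    exact Real.one_rpow ν
  rw [besselJ, Fs]
  simp_rw [hrw, ← mul_assoc]
  rw [tsum_mul_right]
  rw [show Real.Gamma (ν + 1) * (2 / u) ^ ν *
      ((∑' j : ℕ, (-1:ℝ) ^ j / (j.factorial * Real.Gamma ((j:ℝ) + ν + 1)) * ((u/2)^2)^j) * (u/2) ^ ν)
      = ((2/u) ^ ν * (u/2) ^ ν) * (Real.Gamma (ν + 1) *
      (∑' j : ℕ, (-1:ℝ) ^ j / (j.factorial * Real.Gamma ((j:ℝ) + ν + 1)) * ((u/2)^2)^j)) by ring,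
    h1, one_mul, ← tsum_mul_left]
  exact tsum_congr fun j => by rw [bcoef]; ring


lemma deriv_g (ν u : ℝ) (hν : 0 < ν) (hu : 0 < u) (hu1 : u < 1) :
    deriv (fun v : ℝ => (2 / v) ^ ν * besselJ ν v) u
      = Hs ν ((u/2)^2) * (u/2) / Real.Gamma (ν+1) := by
  have hΓ : (0:ℝ) < Real.Gamma (ν+1) := Real.Gamma_pos_of_pos (by linarith)
  have hee : (fun v : ℝ => (2 / v) ^ ν * besselJ ν v)
      =ᶠ[𝓝 u] (fun v : ℝ => Fs ν ((v/2)^2) / Real.Gamma (ν+1)) := by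
    filter_upwards [eventually_gt_nhds hu] with v hv
    rw [eq_div_iff hΓ.ne']
    rw [← besselJ_eq ν v hν hv]
    ring
  rw [hee.deriv_eq]
  have hx : (u/2)^2 ∈ Metric.ball (0:ℝ) 1 := by
    rw [Metric.mem_ball, Real.dist_eq, sub_zero, abs_of_nonneg (by positivity)]
    nlinarith
  have inner : HasDerivAt (fun v : ℝ => (v/2)^2) (u/2) u := by
    have h : HasDerivAt (fun v : ℝ => (id v/2)^2) _ u := ((hasDerivAt_id u).div_const 2).fun_pow 2
    convert h using 1 <;> simp [id] <;> ring
  have houter := (hasDerivAt_Fs ν hν hx).comp u inner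
  have : HasDerivAt (fun v : ℝ => Fs ν ((v/2)^2) / Real.Gamma (ν+1))
      (Hs ν ((u/2)^2) * (u/2) / Real.Gamma (ν+1)) u := houter.div_const _
  exact this.deriv

lemma delta1_eq (d : ℕ) (u : ℝ) (hd : 1 ≤ d) (hu : 0 < u) :
    Delta1 d u = 1 - Fs ((d:ℝ)/2) ((u/2)^2) := by
  have hν : (0:ℝ) < (d:ℝ)/2 := by
    have : (1:ℝ) ≤ (d:ℝ) := by exact_mod_cast hd
    linarith
  rw [Delta1, besselJ_eq ((d:ℝ)/2) u hν hu]

lemma delta2_eq (d : ℕ) (u : ℝ) (hd : 1 ≤ d) (hu : 0 < u) (hu1 : u < 1) :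
    Delta2 d u = 2 - 2 * Fs ((d:ℝ)/2) ((u/2)^2)
      - ((d:ℝ)+2) * (Hs ((d:ℝ)/2) ((u/2)^2))^2 * (u/2)^2 := by
  have hν : (0:ℝ) < (d:ℝ)/2 := by
    have : (1:ℝ) ≤ (d:ℝ) := by exact_mod_cast hd
    linarith
  have hΓ : (0:ℝ) < Real.Gamma ((d:ℝ)/2+1) := Real.Gamma_pos_of_pos (by linarith)
  have h1 := besselJ_eq ((d:ℝ)/2) u hν hu
  have h2 := deriv_g ((d:ℝ)/2) u hν hu hu1
  rw [Delta2, h2,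
    show 2 * Real.Gamma ((d:ℝ)/2+1) * (2/u) ^ ((d:ℝ)/2) * besselJ ((d:ℝ)/2) u
      = 2 * (Real.Gamma ((d:ℝ)/2+1) * (2/u) ^ ((d:ℝ)/2) * besselJ ((d:ℝ)/2) u) by ring, h1]
  field_simp


lemma arith1 (a1 a2 x : ℝ) (ha1 : 0 < a1) (ha1le : a1 ≤ 1) (ha2 : 0 < a2)
    (ha2le : a2 ≤ 1/2) (hx : 0 < x) (hxh : x ≤ 1/2) (hxa : x ≤ a1/4) :
    (a1/2)*x ≤ a1*x - a2*x^2 - 2*x^3 := by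
  nlinarith [mul_le_mul_of_nonneg_left hxh (le_of_lt hx), sq_nonneg x,
    mul_le_mul_of_nonneg_left hxa (le_of_lt hx), mul_pos hx hx]

lemma arith2 (d a1 a2 x S T : ℝ) (hd : 1 ≤ d) (ha1 : 0 < a1) (ha1le : a1 ≤ 1)
    (ha2 : 0 < a2) (ha2le : a2 ≤ 1/2) (hx : 0 < x) (hxh : x ≤ 1/2)
    (hxa2 : (4*d+20)*x ≤ 3*a2)
    (hS1 : -(2*x^2) ≤ S) (hS2 : S ≤ 2*x^2) (hT1 : -(2*x^3) ≤ T) (hT2 : T ≤ 2*x^3) :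
    3*a2*x^2 ≤ 6*a2*x^2 + (4*x*S - 2*T - (d+2)*x*(2*a2*x+S)^2) := by
  have hx2 : (0:ℝ) ≤ x^2 := sq_nonneg x
  have hw1 : -(2*x) ≤ 2*a2*x + S := by nlinarith
  have hw2 : 2*a2*x + S ≤ 2*x := by nlinarith
  have hw3 : (2*a2*x+S)^2 ≤ 4*x^2 := by nlinarith
  have hd2 : (0:ℝ) ≤ (d+2)*x := mul_nonneg (by linarith) hx.le
  have h5 : (d+2)*x*(2*a2*x+S)^2 ≤ (d+2)*x*(4*x^2) := mul_le_mul_of_nonneg_left hw3 hd2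
  have h7 : 4*x*(-(2*x^2)) ≤ 4*x*S := mul_le_mul_of_nonneg_left hS1 (by linarith)
  have h8 : (4*d+20)*x*x^2 ≤ 3*a2*x^2 := mul_le_mul_of_nonneg_right hxa2 hx2
  nlinarith

end Stmt6Aux


set_option maxHeartbeats 1000000 in
theorem stmt6 (d : ℕ) (hd : 1 ≤ d) :
    ∃ c₂ > (0 : ℝ), ∃ c₃ > (0 : ℝ), ∀ u : ℝ, 0 < u → u ≤ c₂ →
      c₃ * u ^ 2 ≤ Delta1 d u ∧ c₃ * u ^ 4 ≤ Delta2 d u := by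
  open Stmt6Aux in
  have hd1 : (1:ℝ) ≤ (d:ℝ) := by exact_mod_cast hd
  set ν : ℝ := (d:ℝ)/2 with hνdef
  have hν : 0 < ν := by simp only [hνdef]; linarith
  set a1 : ℝ := 1/(ν+1) with ha1def
  set a2 : ℝ := 1/(2*(ν+1)*(ν+2)) with ha2def
  have ha1pos : 0 < a1 := by rw [ha1def]; positivity
  have ha2pos : 0 < a2 := by rw [ha2def]; positivity
  have ha1le : a1 ≤ 1 := by
    rw [ha1def, div_le_one (by linarith)]; linarith
  have ha2le : a2 ≤ 1/2 := by
    rw [ha2def, div_le_div_iff₀ (by nlinarith) (by norm_num)]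
    nlinarith
  have hkey : ((d:ℝ)+2) * a1 = 2 := by
    rw [ha1def, hνdef]
    field_simp
  set x₀ : ℝ := min (min (1/2) (a1/4)) (3*a2/(4*(d:ℝ)+20)) with hx₀def
  have hx₀pos : 0 < x₀ := by
    apply lt_min (lt_min (by norm_num) (by linarith))
    positivity
  refine ⟨Real.sqrt x₀, Real.sqrt_pos.mpr hx₀pos, min (a1/8) (3*a2/16),
    lt_min (by linarith) (by linarith), fun u hu hule => ?_⟩
  have hu2 : u^2 ≤ x₀ := by
    have := Real.sq_sqrt hx₀pos.le
    nlinarith [Real.sqrt_pos.mpr hx₀pos]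
  have hx₀half : x₀ ≤ 1/2 := le_trans (min_le_left _ _) (min_le_left _ _)
  have hu1 : u < 1 := by nlinarith
  -- the variable x
  have hxpos : 0 < (u/2)^2 := by positivity
  have hxx₀ : (u/2)^2 ≤ x₀ := by nlinarith
  have hxhalf : (u/2)^2 ≤ 1/2 := le_trans hxx₀ hx₀half
  have hxa1 : (u/2)^2 ≤ a1/4 := le_trans hxx₀ (le_trans (min_le_left _ _) (min_le_right _ _))
  have hxa2 : (u/2)^2 ≤ 3*a2/(4*(d:ℝ)+20) := le_trans hxx₀ (min_le_right _ _)
  have hT := Fs_expansion ν hν hxpos.le hxhalf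
  have hS := Hs_expansion ν hν hxpos.le hxhalf
  rw [bcoef_zero ν hν] at hT
  rw [bcoef_one ν hν, bcoef_two ν hν, ← ha1def, ← ha2def] at hT hS
  rw [delta1_eq d u hd hu, delta2_eq d u hd hu hu1, ← hνdef]
  set x : ℝ := (u/2)^2 with hxdef
  set F : ℝ := Fs ν x with hFdef
  set H : ℝ := Hs ν x with hHdef
  rw [abs_le] at hT hS
  have hxa2' : (4*(d:ℝ)+20) * x ≤ 3*a2 := by
    have hpos : (0:ℝ) < 4*(d:ℝ)+20 := by positivity
    rw [le_div_iff₀ hpos] at hxa2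
    linarith
  have hu4 : u^2 = 4*x := by rw [hxdef]; ring
  have hu4' : u^4 = 16*x^2 := by rw [hxdef]; ring
  clear_value x F H a2 a1 ν
  constructor
  · -- Delta1
    have h1 : 1 - F ≥ a1*x - a2*x^2 - 2*x^3 := by linarith [hT.2]
    have h2 := Stmt6Aux.arith1 a1 a2 x ha1pos ha1le ha2pos ha2le hxpos hxhalf hxa1
    calc min (a1/8) (3*a2/16) * u^2 ≤ (a1/8) * (4*x) := by
          rw [← hu4]
          apply mul_le_mul_of_nonneg_right (min_le_left _ _) (by positivity)
      _ = (a1/2)*x := by ring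
      _ ≤ 1 - F := by linarith
  · -- Delta2
    obtain ⟨S, hSdef2, hSlb, hSub⟩ :
        ∃ S, H = -a1 + 2*a2*x + S ∧ -(2*x^2) ≤ S ∧ S ≤ 2*x^2 := by
      refine ⟨H - (-a1 + 2*a2*x), by ring, ?_, ?_⟩
      · have := hS.1; linarith
      · have := hS.2; linarith
    obtain ⟨T, hTdef2, hTlb, hTub⟩ :
        ∃ T, F = 1 - a1*x + a2*x^2 + T ∧ -(2*x^3) ≤ T ∧ T ≤ 2*x^3 := by
      refine ⟨F - (1 - a1*x + a2*x^2), by ring, ?_, ?_⟩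
      · have := hT.1; linarith
      · have := hT.2; linarith
    have hid : 2 - 2*F - ((d:ℝ)+2)*H^2*x
        = 6*a2*x^2 + (4*x*S - 2*T - ((d:ℝ)+2)*x*(2*a2*x+S)^2) := by
      rw [hSdef2, hTdef2]
      linear_combination (2*x*(2*a2*x+S) - a1*x) * hkey
    rw [hid]
    have hc3 : min (a1/8) (3*a2/16) * u^4 ≤ 3*a2*x^2 := by
      rw [hu4']
      calc min (a1/8) (3*a2/16) * (16*x^2) ≤ (3*a2/16) * (16*x^2) := by
            apply mul_le_mul_of_nonneg_right (min_le_right _ _) (by positivity)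
        _ = 3*a2*x^2 := by ring
    have hbound := Stmt6Aux.arith2 (d:ℝ) a1 a2 x S T hd1 ha1pos ha1le ha2pos ha2le
      hxpos hxhalf hxa2' hSlb hSub hTlb hTub
    linarith
end

section
/- Let A be a k×d real matrix such that A^T A = c I_d + E where c > 0 and the operator norm of E satisfies ‖E‖ ≤ c/2. Then for every v ∈ ℝ^k, the orthogonal projection p = A(A^TA)^{-1}A^T v onto the column space of A satisfies | ‖p‖² − c^{-1}‖A^T v‖² | ≤ 2 c^{-2} ‖E‖ ‖A^T v‖². -/
open Matrix

theorem stmt9 (k d : ℕ) (hd : 1 ≤ d)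
    (A : Matrix (Fin k) (Fin d) ℝ) (c : ℝ) (hc : 0 < c)
    (E : Matrix (Fin d) (Fin d) ℝ) (hEsymm : Eᵀ = E)
    (hATA : Aᵀ * A = c • (1 : Matrix (Fin d) (Fin d) ℝ) + E)
    (hEnorm : ‖Matrix.toEuclideanCLM (𝕜 := ℝ) E‖ ≤ c / 2)
    (v : Fin k → ℝ) :
    letI p : Fin k → ℝ := (A * (Aᵀ * A)⁻¹ * Aᵀ).mulVec v
    letI q : Fin d → ℝ := Aᵀ.mulVec v
    |p ⬝ᵥ p - c⁻¹ * (q ⬝ᵥ q)| ≤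
      2 * c⁻¹ ^ 2 * ‖Matrix.toEuclideanCLM (𝕜 := ℝ) E‖ * (q ⬝ᵥ q) := by
  set q : Fin d → ℝ := Aᵀ.mulVec v with hqdef
  set p : Fin k → ℝ := (A * (Aᵀ * A)⁻¹ * Aᵀ).mulVec v with hpdef
  set N : Matrix (Fin d) (Fin d) ℝ := Aᵀ * A with hN
  set nE : ℝ := ‖Matrix.toEuclideanCLM (𝕜 := ℝ) E‖ with hnE
  have hnE0 : 0 ≤ nE := norm_nonneg _
  have key : ∀ w : Fin d → ℝ,
      ‖(WithLp.equiv 2 (Fin d → ℝ)).symm (E.mulVec w)‖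
        ≤ nE * ‖(WithLp.equiv 2 (Fin d → ℝ)).symm w‖ := fun w => by
    rw [show E.mulVec w = Matrix.toLin' E w from (Matrix.toLin'_apply E w).symm,
      ]
    exact ContinuousLinearMap.le_opNorm (Matrix.toEuclideanCLM (𝕜 := ℝ) E) ((WithLp.equiv 2 (Fin d → ℝ)).symm w)
  have hNmv : ∀ w : Fin d → ℝ, N.mulVec w = c • w + E.mulVec w := fun w => by
    rw [hATA, Matrix.add_mulVec, Matrix.smul_mulVec, Matrix.one_mulVec]
  have hdet : IsUnit N.det := by
    rw [isUnit_iff_ne_zero]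
    intro h0
    obtain ⟨w, hw0, hw⟩ := Matrix.exists_mulVec_eq_zero_iff.2 h0
    have hEw : E.mulVec w = -(c • w) := eq_neg_of_add_eq_zero_right (by rw [← hNmv w, hw])
    have h1 := key w
    rw [hEw, (by rfl : (WithLp.equiv 2 (Fin d → ℝ)).symm (-(c • w)) = -(c • (WithLp.equiv 2 (Fin d → ℝ)).symm w)), norm_neg, norm_smul,
      Real.norm_eq_abs, abs_of_pos hc] at h1
    have hW0 : (WithLp.equiv 2 (Fin d → ℝ)).symm w ≠ 0 := fun h => hw0 (by
      simpa using congrArg (WithLp.equiv 2 (Fin d → ℝ)) h)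
    have hwpos : 0 < ‖(WithLp.equiv 2 (Fin d → ℝ)).symm w‖ := norm_pos_iff.2 hW0
    nlinarith [mul_le_mul_of_nonneg_right hEnorm hwpos.le]
  set x : Fin d → ℝ := N⁻¹.mulVec q with hx
  have hxq : N.mulVec x = q := by
    rw [hx, Matrix.mulVec_mulVec, Matrix.mul_nonsing_inv N hdet, Matrix.one_mulVec]
  have hq : q = c • x + E.mulVec x := by rw [← hxq, hNmv]
  -- p ⬝ p = q ⬝ x
  have hNTsymm : N⁻¹ᵀ = N⁻¹ := by
    rw [Matrix.transpose_nonsing_inv]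
    congr 1
    rw [hN, Matrix.transpose_mul, Matrix.transpose_transpose]
  have hppqx : p ⬝ᵥ p = q ⬝ᵥ x := by
    have h2 : Aᵀ * (A * (N⁻¹ * Aᵀ)) = Aᵀ := by
      rw [← Matrix.mul_assoc, ← hN, Matrix.mul_nonsing_inv_cancel_left N Aᵀ hdet]
    have hB : (A * N⁻¹ * Aᵀ)ᵀ * (A * N⁻¹ * Aᵀ) = A * N⁻¹ * Aᵀ := by
      have h1 : (A * N⁻¹ * Aᵀ)ᵀ = A * N⁻¹ * Aᵀ := by
        rw [Matrix.transpose_mul, Matrix.transpose_mul, Matrix.transpose_transpose, hNTsymm]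
        exact (Matrix.mul_assoc A N⁻¹ Aᵀ).symm
      rw [h1, Matrix.mul_assoc (A * N⁻¹), Matrix.mul_assoc A N⁻¹ Aᵀ, h2]
      exact Matrix.mul_assoc A N⁻¹ Aᵀ
    have e1 : (v ᵥ* ((A * N⁻¹ * Aᵀ)ᵀ * (A * N⁻¹ * Aᵀ))) ⬝ᵥ v = p ⬝ᵥ p := by
      rw [← Matrix.vecMul_vecMul, Matrix.vecMul_transpose, ← Matrix.dotProduct_mulVec, ← hpdef]
    have e2 : (v ᵥ* (A * N⁻¹ * Aᵀ)) ⬝ᵥ v = q ⬝ᵥ x := by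
      rw [← Matrix.vecMul_vecMul, ← Matrix.vecMul_vecMul, ← Matrix.dotProduct_mulVec,
        hx, hqdef, Matrix.dotProduct_mulVec (Aᵀ *ᵥ v) N⁻¹, Matrix.mulVec_transpose A v]
    rw [← e1, ← e2, hB]
  -- norms
  set Q := (WithLp.equiv 2 (Fin d → ℝ)).symm q with hQ
  set X := (WithLp.equiv 2 (Fin d → ℝ)).symm x with hX
  have hqq : q ⬝ᵥ q = ‖Q‖ ^ 2 := by
    rw [hQ, ← real_inner_self_eq_norm_sq]; rfl
  have hEx : ‖(WithLp.equiv 2 (Fin d → ℝ)).symm (E.mulVec x)‖ ≤ nE * ‖X‖ := key x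
  have hXb : ‖X‖ ≤ 2 * c⁻¹ * ‖Q‖ := by
    have h1 : (WithLp.equiv 2 (Fin d → ℝ)).symm (c • x)
        = Q - (WithLp.equiv 2 (Fin d → ℝ)).symm (E.mulVec x) := by
      rw [hQ, hq, (by rfl : (WithLp.equiv 2 (Fin d → ℝ)).symm (c • x + E *ᵥ x) = (WithLp.equiv 2 (Fin d → ℝ)).symm (c • x) + (WithLp.equiv 2 (Fin d → ℝ)).symm (E *ᵥ x))]
      abel
    have h2 : c * ‖X‖ ≤ ‖Q‖ + nE * ‖X‖ := by
      have h3 : ‖(WithLp.equiv 2 (Fin d → ℝ)).symm (c • x)‖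
          ≤ ‖Q‖ + ‖(WithLp.equiv 2 (Fin d → ℝ)).symm (E.mulVec x)‖ := by
        rw [h1]; exact norm_sub_le _ _
      rw [(by rfl : (WithLp.equiv 2 (Fin d → ℝ)).symm (c • x) = c • X), norm_smul, Real.norm_eq_abs, abs_of_pos hc] at h3
      linarith [hEx]
    have h4 : nE * ‖X‖ ≤ c / 2 * ‖X‖ := mul_le_mul_of_nonneg_right hEnorm (norm_nonneg _)
    have h5 : c * ‖X‖ ≤ 2 * ‖Q‖ := by linarith
    have h6 := mul_le_mul_of_nonneg_left h5 (inv_pos.2 hc).le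
    calc ‖X‖ = c⁻¹ * (c * ‖X‖) := by field_simp
      _ ≤ c⁻¹ * (2 * ‖Q‖) := h6
      _ = 2 * c⁻¹ * ‖Q‖ := by ring
  have hCS : |q ⬝ᵥ E.mulVec x| ≤ ‖Q‖ * ‖(WithLp.equiv 2 (Fin d → ℝ)).symm (E.mulVec x)‖ := by
    have := abs_real_inner_le_norm Q ((WithLp.equiv 2 (Fin d → ℝ)).symm (E.mulVec x))
    rw [hQ, (by rfl : inner ℝ ((WithLp.equiv 2 (Fin d → ℝ)).symm q) ((WithLp.equiv 2 (Fin d → ℝ)).symm (E *ᵥ x)) = (E *ᵥ x) ⬝ᵥ star q), star_trivial,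
      dotProduct_comm] at this
    exact this
  -- main computation
  have hsplit : q ⬝ᵥ q = c * (q ⬝ᵥ x) + q ⬝ᵥ E.mulVec x := by
    calc q ⬝ᵥ q = q ⬝ᵥ (c • x + E.mulVec x) := by rw [← hq]
      _ = c * (q ⬝ᵥ x) + q ⬝ᵥ E.mulVec x := by
          rw [dotProduct_add, dotProduct_smul, smul_eq_mul]
  have hmain : p ⬝ᵥ p - c⁻¹ * (q ⬝ᵥ q) = -(c⁻¹ * (q ⬝ᵥ E.mulVec x)) := by
    rw [hppqx, hsplit]
    field_simp
    ring
  rw [hmain, abs_neg, abs_mul, abs_of_pos (inv_pos.2 hc), hqq]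
  have hEx2 : ‖(WithLp.equiv 2 (Fin d → ℝ)).symm (E.mulVec x)‖ ≤ nE * (2 * c⁻¹ * ‖Q‖) :=
    hEx.trans (mul_le_mul_of_nonneg_left hXb hnE0)
  have hQ0 : 0 ≤ ‖Q‖ := norm_nonneg _
  have hc0 : 0 < c⁻¹ := inv_pos.2 hc
  calc c⁻¹ * |q ⬝ᵥ E.mulVec x|
      ≤ c⁻¹ * (‖Q‖ * (nE * (2 * c⁻¹ * ‖Q‖))) := by
        apply mul_le_mul_of_nonneg_left _ hc0.le
        exact hCS.trans (mul_le_mul_of_nonneg_left hEx2 hQ0)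
    _ = 2 * c⁻¹ ^ 2 * nE * ‖Q‖ ^ 2 := by ring
end

section
/- For fixed integer q ≥ 0 and fixed θ ∈ (0, π/2), as b → ∞, ∫₀^θ cos^q(r) sin^{b-1}(r) dr ∼ cos^q(θ) sin^{b-1}(θ) / ((b-1) cot(θ)); i.e. the ratio of the two sides tends to 1. -/
open Filter Topology Real

lemma my_cont (q : ℕ) {b : ℝ} (hb : 1 ≤ b) :
    Continuous (fun r : ℝ => Real.cos r ^ q * Real.sin r ^ (b - 1)) :=
  (Real.continuous_cos.pow q).mul
    ((Real.continuous_rpow_const (by linarith)).comp Real.continuous_sin)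

lemma my_ftc {b : ℝ} (hb : 1 ≤ b) (hb0 : b ≠ 0) (a c : ℝ) :
    ∫ r in a..c, Real.cos r * Real.sin r ^ (b - 1)
      = (Real.sin c ^ b - Real.sin a ^ b) / b := by
  have hder : ∀ r ∈ Set.uIcc a c,
      HasDerivAt (fun x => Real.sin x ^ b / b) (Real.cos r * Real.sin r ^ (b - 1)) r := by
    intro r _
    have h1 : HasDerivAt (fun x : ℝ => Real.sin x ^ b)
        ((b * Real.sin r ^ (b - 1)) * Real.cos r) r :=
      (Real.hasDerivAt_rpow_const (Or.inr hb)).comp r (Real.hasDerivAt_sin r)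
    have h2 := h1.div_const b
    have e : Real.cos r * Real.sin r ^ (b - 1) = b * Real.sin r ^ (b - 1) * Real.cos r / b := by
      rw [mul_div_right_comm, mul_div_cancel_left₀ _ hb0]; ring
    rw [e]; exact h2
  have hint : IntervalIntegrable (fun r => Real.cos r * Real.sin r ^ (b - 1))
      MeasureTheory.volume a c := by
    apply Continuous.intervalIntegrable
    simpa using my_cont 1 hb
  rw [intervalIntegral.integral_eq_sub_of_hasDerivAt hder hint]
  ring

set_option maxHeartbeats 1000000 in
theorem stmt14 (q : ℕ) (θ : ℝ) (hθ : θ ∈ Set.Ioo 0 (Real.pi / 2)) :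
    Tendsto
      (fun b : ℝ =>
        (∫ r in (0 : ℝ)..θ, Real.cos r ^ q * Real.sin r ^ (b - 1)) /
          (Real.cos θ ^ q * Real.sin θ ^ (b - 1) /
            ((b - 1) * (Real.cos θ / Real.sin θ))))
      atTop (𝓝 1) := by
  obtain ⟨hθ0, hθπ⟩ := hθ
  have hpi := Real.pi_pos
  have hcos : 0 < Real.cos θ := Real.cos_pos_of_mem_Ioo ⟨by linarith, hθπ⟩
  have hsin : 0 < Real.sin θ := Real.sin_pos_of_pos_of_lt_pi hθ0 (by linarith)
  rw [Metric.tendsto_nhds]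
  intro ε hε
  -- choose t close to θ from below
  have hcc' : Tendsto Real.cos (𝓝[<] θ) (𝓝 (Real.cos θ)) :=
    Real.continuous_cos.continuousAt.mono_left nhdsWithin_le_nhds
  have h1' : Tendsto (fun t => Real.cos θ / Real.cos t) (𝓝[<] θ) (𝓝 1) := by
    have := Tendsto.div (tendsto_const_nhds (x := Real.cos θ)) hcc' hcos.ne'
    rw [div_self hcos.ne'] at this; exact this
  have h2' : Tendsto (fun t => (Real.cos t / Real.cos θ) ^ q) (𝓝[<] θ) (𝓝 1) := by
    have := Tendsto.pow (Tendsto.div hcc' (tendsto_const_nhds (x := Real.cos θ)) hcos.ne') q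
    simpa [div_self hcos.ne'] using this
  have e1 : ∀ᶠ t in 𝓝[<] θ, 1 - ε < Real.cos θ / Real.cos t :=
    h1'.eventually (eventually_gt_nhds (by linarith))
  have e2 : ∀ᶠ t in 𝓝[<] θ, (Real.cos t / Real.cos θ) ^ q < 1 + ε :=
    h2'.eventually (eventually_lt_nhds (by linarith))
  have e3 : ∀ᶠ t in 𝓝[<] θ, 0 < t :=
    eventually_of_mem (Ioo_mem_nhdsLT_of_mem (Set.mem_Ioc.2 ⟨hθ0, le_refl θ⟩))
      fun t ht => ht.1
  have e4 : ∀ᶠ t in 𝓝[<] θ, t < θ :=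
    eventually_of_mem self_mem_nhdsWithin fun t ht => ht
  obtain ⟨t, ht1, ht2, ht0, htθ⟩ := (e1.and (e2.and (e3.and e4))).exists
  -- basic facts about t
  have hct : 0 < Real.cos t := Real.cos_pos_of_mem_Ioo ⟨by linarith, by linarith⟩
  have hst : 0 < Real.sin t := Real.sin_pos_of_pos_of_lt_pi ht0 (by linarith)
  have hcc : Real.cos θ ≤ Real.cos t :=
    Real.cos_le_cos_of_nonneg_of_le_pi ht0.le (by linarith) htθ.le
  have hss : Real.sin t < Real.sin θ := by
    apply Real.strictMonoOn_sin ⟨by linarith, by linarith⟩ ⟨by linarith, by linarith⟩ htθ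
  set ρ : ℝ := Real.sin t / Real.sin θ with hρdef
  have hρ0 : 0 < ρ := div_pos hst hsin
  have hρ1 : ρ < 1 := (div_lt_one hsin).2 hss
  -- limits
  have hlim1 : Tendsto (fun b : ℝ => (b - 1) / b) atTop (𝓝 1) := by
    have h : Tendsto (fun b : ℝ => 1 - b⁻¹) atTop (𝓝 (1 - 0)) :=
      tendsto_const_nhds.sub tendsto_inv_atTop_zero
    rw [sub_zero] at h
    apply h.congr'
    filter_upwards [eventually_ne_atTop (0 : ℝ)] with b hb
    field_simp
  have hlim2 : Tendsto (fun b : ℝ => ρ ^ b) atTop (𝓝 0) :=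
    tendsto_rpow_atTop_of_base_lt_one ρ (by linarith) hρ1
  have hlim3 : Tendsto (fun b : ℝ => (b - 1) * ρ ^ (b - 1)) atTop (𝓝 0) := by
    have hc : 0 < -Real.log ρ := by
      have := Real.log_neg hρ0 hρ1
      linarith
    have h0 : Tendsto (fun x : ℝ => x ^ (1 : ℝ) * Real.exp (-(-Real.log ρ) * x)) atTop (𝓝 0) :=
      tendsto_rpow_mul_exp_neg_mul_atTop_nhds_zero 1 _ hc
    have hshift : Tendsto (fun b : ℝ => b - 1) atTop atTop :=
      tendsto_atTop_add_const_right _ (-1) tendsto_id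
    have h1 := h0.comp hshift
    apply h1.congr'
    filter_upwards [hshift.eventually_gt_atTop 0] with b hb
    simp only [Function.comp]
    rw [Real.rpow_one, Real.rpow_def_of_pos hρ0]
    ring_nf
  -- the bound functions
  set L : ℝ → ℝ := fun b => (Real.cos θ / Real.cos t) * ((b - 1) / b) * (1 - ρ ^ b) with hLdef
  set U : ℝ → ℝ := fun b => θ * ((b - 1) * ρ ^ (b - 1)) * (Real.cos θ / (Real.cos θ ^ q * Real.sin θ))
      + (Real.cos t / Real.cos θ) ^ q * ((b - 1) / b) with hUdef
  have hL : Tendsto L atTop (𝓝 (Real.cos θ / Real.cos t)) := by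
    have := ((tendsto_const_nhds (x := Real.cos θ / Real.cos t)).mul hlim1).mul
      ((tendsto_const_nhds (x := (1:ℝ))).sub hlim2)
    simpa using this
  have hU : Tendsto U atTop (𝓝 ((Real.cos t / Real.cos θ) ^ q)) := by
    have := (((tendsto_const_nhds (x := θ)).mul hlim3).mul
      (tendsto_const_nhds (x := Real.cos θ / (Real.cos θ ^ q * Real.sin θ)))).add
      ((tendsto_const_nhds (x := (Real.cos t / Real.cos θ) ^ q)).mul hlim1)
    simpa using this
  have hLe : ∀ᶠ b in atTop, 1 - ε < L b := hL.eventually (eventually_gt_nhds ht1)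
  have hUe : ∀ᶠ b in atTop, U b < 1 + ε := hU.eventually (eventually_lt_nhds ht2)
  filter_upwards [hLe, hUe, eventually_gt_atTop (1 : ℝ)] with b hLb hUb hb
  have hb1 : (0 : ℝ) < b - 1 := by linarith
  have hb0 : (0 : ℝ) < b := by linarith
  set M : ℝ := Real.cos θ ^ q * Real.sin θ ^ (b - 1) / ((b - 1) * (Real.cos θ / Real.sin θ)) with hMdef
  set I : ℝ := ∫ r in (0 : ℝ)..θ, Real.cos r ^ q * Real.sin r ^ (b - 1) with hIdef
  have hX : (0 : ℝ) < Real.sin θ ^ (b - 1) := Real.rpow_pos_of_pos hsin _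
  have hY : (0 : ℝ) < Real.sin t ^ (b - 1) := Real.rpow_pos_of_pos hst _
  have hM : 0 < M := by
    apply div_pos (mul_pos (pow_pos hcos q) hX)
      (mul_pos hb1 (div_pos hcos hsin))
  -- rpow algebra
  have hXb : Real.sin θ ^ b = Real.sin θ ^ (b - 1) * Real.sin θ := by
    rw [← Real.rpow_add_one hsin.ne' (b - 1)]
    norm_num
  have hYb : Real.sin t ^ b = Real.sin t ^ (b - 1) * Real.sin t := by
    rw [← Real.rpow_add_one hst.ne' (b - 1)]
    norm_num
  have hρb : ρ ^ b = Real.sin t ^ b / Real.sin θ ^ b := Real.div_rpow hst.le hsin.le b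
  have hρb1 : ρ ^ (b - 1) = Real.sin t ^ (b - 1) / Real.sin θ ^ (b - 1) :=
    Real.div_rpow hst.le hsin.le (b - 1)
  -- integral bounds
  have hint1 : IntervalIntegrable (fun r => Real.cos r ^ q * Real.sin r ^ (b - 1))
      MeasureTheory.volume 0 t := (my_cont q hb.le).intervalIntegrable _ _
  have hint2 : IntervalIntegrable (fun r => Real.cos r ^ q * Real.sin r ^ (b - 1))
      MeasureTheory.volume t θ := (my_cont q hb.le).intervalIntegrable _ _
  have hsplit : I = (∫ r in (0 : ℝ)..t, Real.cos r ^ q * Real.sin r ^ (b - 1))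
      + ∫ r in t..θ, Real.cos r ^ q * Real.sin r ^ (b - 1) := by
    rw [hIdef, ← intervalIntegral.integral_add_adjacent_intervals hint1 hint2]
  have hcsint : IntervalIntegrable (fun r => Real.cos r * Real.sin r ^ (b - 1))
      MeasureTheory.volume t θ := by
    have := (my_cont 1 hb.le).intervalIntegrable (μ := MeasureTheory.volume) t θ
    simpa using this
  -- pointwise bounds on [t, θ]
  have hptlow : ∀ r ∈ Set.Icc t θ,
      (Real.cos θ ^ q / Real.cos t) * (Real.cos r * Real.sin r ^ (b - 1))
        ≤ Real.cos r ^ q * Real.sin r ^ (b - 1) := by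
    intro r hr
    have hrc0 : 0 ≤ Real.cos r := Real.cos_nonneg_of_mem_Icc ⟨by linarith [hr.1], by linarith [hr.2]⟩
    have hrs0 : 0 ≤ Real.sin r ^ (b - 1) := Real.rpow_nonneg (Real.sin_nonneg_of_nonneg_of_le_pi (by linarith [hr.1]) (by linarith [hr.2])) _
    have h1 : Real.cos r ≤ Real.cos t :=
      Real.cos_le_cos_of_nonneg_of_le_pi ht0.le (by linarith [hr.2]) hr.1
    have h2 : Real.cos θ ≤ Real.cos r :=
      Real.cos_le_cos_of_nonneg_of_le_pi (by linarith [hr.1]) (by linarith) hr.2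
    have key : (Real.cos θ ^ q / Real.cos t) * Real.cos r ≤ Real.cos r ^ q := by
      have hA : (Real.cos θ ^ q / Real.cos t) * Real.cos r ≤ Real.cos θ ^ q := by
        rw [div_mul_eq_mul_div, div_le_iff₀ hct]
        exact mul_le_mul_of_nonneg_left h1 (pow_nonneg hcos.le q)
      have hB : Real.cos θ ^ q ≤ Real.cos r ^ q := pow_le_pow_left₀ hcos.le h2 q
      linarith
    calc (Real.cos θ ^ q / Real.cos t) * (Real.cos r * Real.sin r ^ (b - 1))
        = ((Real.cos θ ^ q / Real.cos t) * Real.cos r) * Real.sin r ^ (b - 1) := by ring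
      _ ≤ Real.cos r ^ q * Real.sin r ^ (b - 1) := mul_le_mul_of_nonneg_right key hrs0
  have hptup : ∀ r ∈ Set.Icc t θ,
      Real.cos r ^ q * Real.sin r ^ (b - 1)
        ≤ (Real.cos t ^ q / Real.cos θ) * (Real.cos r * Real.sin r ^ (b - 1)) := by
    intro r hr
    have hrs0 : 0 ≤ Real.sin r ^ (b - 1) := Real.rpow_nonneg (Real.sin_nonneg_of_nonneg_of_le_pi (by linarith [hr.1]) (by linarith [hr.2])) _
    have hrc0 : 0 ≤ Real.cos r := Real.cos_nonneg_of_mem_Icc ⟨by linarith [hr.1], by linarith [hr.2]⟩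
    have h1 : Real.cos r ≤ Real.cos t :=
      Real.cos_le_cos_of_nonneg_of_le_pi ht0.le (by linarith [hr.2]) hr.1
    have h2 : Real.cos θ ≤ Real.cos r :=
      Real.cos_le_cos_of_nonneg_of_le_pi (by linarith [hr.1]) (by linarith) hr.2
    have key : Real.cos r ^ q ≤ (Real.cos t ^ q / Real.cos θ) * Real.cos r := by
      have hB : Real.cos r ^ q ≤ Real.cos t ^ q := pow_le_pow_left₀ hrc0 h1 q
      have hA : Real.cos t ^ q ≤ (Real.cos t ^ q / Real.cos θ) * Real.cos r := by
        rw [div_mul_eq_mul_div, le_div_iff₀ hcos]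
        exact mul_le_mul_of_nonneg_left h2 (pow_nonneg hct.le q)
      linarith
    calc Real.cos r ^ q * Real.sin r ^ (b - 1)
        ≤ ((Real.cos t ^ q / Real.cos θ) * Real.cos r) * Real.sin r ^ (b - 1) :=
          mul_le_mul_of_nonneg_right key hrs0
      _ = (Real.cos t ^ q / Real.cos θ) * (Real.cos r * Real.sin r ^ (b - 1)) := by ring
  -- value of the model integral on [t, θ]
  have hftc : ∫ r in t..θ, Real.cos r * Real.sin r ^ (b - 1)
      = (Real.sin θ ^ b - Real.sin t ^ b) / b := my_ftc hb.le hb0.ne' t θ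
  -- lower bound on I
  have hlow : L b * M ≤ I := by
    have hmid : (Real.cos θ ^ q / Real.cos t) * ((Real.sin θ ^ b - Real.sin t ^ b) / b)
        ≤ ∫ r in t..θ, Real.cos r ^ q * Real.sin r ^ (b - 1) := by
      have := intervalIntegral.integral_mono_on (μ := MeasureTheory.volume) htθ.le
        (hcsint.const_mul (Real.cos θ ^ q / Real.cos t)) hint2 hptlow
      rwa [intervalIntegral.integral_const_mul, hftc] at this
    have hfirst : 0 ≤ ∫ r in (0:ℝ)..t, Real.cos r ^ q * Real.sin r ^ (b - 1) := by
      apply intervalIntegral.integral_nonneg ht0.le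
      intro r hr
      have hrc0 : 0 ≤ Real.cos r := Real.cos_nonneg_of_mem_Icc ⟨by linarith [hr.1], by linarith [hr.2]⟩
      exact mul_nonneg (pow_nonneg hrc0 q)
        (Real.rpow_nonneg (Real.sin_nonneg_of_nonneg_of_le_pi (by linarith [hr.1]) (by linarith [hr.2])) _)
    have hLM : L b * M = (Real.cos θ ^ q / Real.cos t) * ((Real.sin θ ^ b - Real.sin t ^ b) / b) := by
      rw [hLdef, hMdef]
      simp only
      rw [hρb, hXb, hYb]
      field_simp
    rw [hLM, hsplit]
    linarith
  -- upper bound on I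
  have hup : I ≤ U b * M := by
    have hmid : (∫ r in t..θ, Real.cos r ^ q * Real.sin r ^ (b - 1))
        ≤ (Real.cos t ^ q / Real.cos θ) * ((Real.sin θ ^ b - Real.sin t ^ b) / b) := by
      have := intervalIntegral.integral_mono_on (μ := MeasureTheory.volume) htθ.le
        hint2 (hcsint.const_mul (Real.cos t ^ q / Real.cos θ)) hptup
      rwa [intervalIntegral.integral_const_mul, hftc] at this
    have hfirst : (∫ r in (0:ℝ)..t, Real.cos r ^ q * Real.sin r ^ (b - 1))
        ≤ θ * Real.sin t ^ (b - 1) := by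
      have hmono : ∀ r ∈ Set.Icc (0:ℝ) t,
          Real.cos r ^ q * Real.sin r ^ (b - 1) ≤ Real.sin t ^ (b - 1) := by
        intro r hr
        have hrc0 : 0 ≤ Real.cos r := Real.cos_nonneg_of_mem_Icc ⟨by linarith [hr.1], by linarith [hr.2]⟩
        have hrs0 : 0 ≤ Real.sin r := Real.sin_nonneg_of_nonneg_of_le_pi (by linarith [hr.1]) (by linarith [hr.2])
        have h1 : Real.cos r ^ q ≤ 1 := pow_le_one₀ hrc0 (Real.cos_le_one r)
        have h2 : Real.sin r ^ (b - 1) ≤ Real.sin t ^ (b - 1) := by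
          apply Real.rpow_le_rpow hrs0 _ (by linarith)
          exact Real.strictMonoOn_sin.monotoneOn ⟨by linarith [hr.1], by linarith [hr.2]⟩
            ⟨by linarith, by linarith⟩ hr.2
        have h3 : 0 ≤ Real.sin r ^ (b - 1) := Real.rpow_nonneg hrs0 _
        nlinarith
      have := intervalIntegral.integral_mono_on (μ := MeasureTheory.volume) ht0.le
        hint1 (intervalIntegrable_const) hmono
      rw [intervalIntegral.integral_const] at this
      simp at this
      calc (∫ r in (0:ℝ)..t, Real.cos r ^ q * Real.sin r ^ (b - 1))
          ≤ t * Real.sin t ^ (b - 1) := this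
        _ ≤ θ * Real.sin t ^ (b - 1) := by nlinarith
    have hsecond : (Real.cos t ^ q / Real.cos θ) * ((Real.sin θ ^ b - Real.sin t ^ b) / b)
        ≤ (Real.cos t ^ q / Real.cos θ) * (Real.sin θ ^ b / b) := by
      have hsub : Real.sin θ ^ b - Real.sin t ^ b ≤ Real.sin θ ^ b :=
        sub_le_self _ (Real.rpow_nonneg hst.le b)
      exact mul_le_mul_of_nonneg_left ((div_le_div_iff_of_pos_right hb0).2 hsub)
        (div_nonneg (pow_nonneg hct.le q) hcos.le)
    have hUM : U b * M = θ * Real.sin t ^ (b - 1)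
        + (Real.cos t ^ q / Real.cos θ) * (Real.sin θ ^ b / b) := by
      rw [hUdef, hMdef]
      simp only
      rw [hρb1, hXb, div_pow]
      field_simp
    rw [hUM, hsplit]
    linarith
  -- conclude
  rw [Real.dist_eq, abs_sub_lt_iff]
  have hdivlow : L b ≤ I / M := by
    rw [le_div_iff₀ hM]; exact hlow
  have hdivup : I / M ≤ U b := by
    rw [div_le_iff₀ hM]; exact hup
  have hgoal1 : I / M < 1 + ε := lt_of_le_of_lt hdivup hUb
  have hgoal2 : 1 - ε < I / M := lt_of_lt_of_le hLb hdivlow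
  constructor <;> linarith
end
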